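/- arXiv:1102.0209 — 5 statements merged into one kernel-verified Lean document; each statement's English description precedes it below -/
import Mathlib

section
/- Let ABC be an acute triangle with orthocenter H, and let B', C' be the reflections of H over CA and AB respectively. Then the angle ∠B'AC' equals 2∠BAC. -/
open EuclideanGeometry Real RealInnerProductSpace Module

/-!
A reflection in a line reverses oriented angles, so reflecting `H` in `CA` and in `AB` gives
`∡ C A B' = ∡ H A C` and `∡ B A C' = ∡ H A B`. Adding oriented angles around `A`,
`∡ B' A C' = ∡ C A H + ∡ C A B + ∡ H A B = 2 • ∡ C A B` modulo `2π`, and since the angle at `A` is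
acute, doubling commutes with taking the unoriented angle.
-/

attribute [local instance] FiniteDimensional.of_fact_finrank_eq_two

namespace Orientation

variable {V : Type*} [NormedAddCommGroup V] [InnerProductSpace ℝ V] [Fact (finrank ℝ V = 2)]
  (o : Orientation ℝ V (Fin 2))

theorem oangle_reflection_reflection {K : Submodule ℝ V} (hK : finrank ℝ Kᗮ = 1) (x y : V) :
    o.oangle (K.reflection x) (K.reflection y) = -o.oangle x y := by
  have hmap : map (Fin 2) K.reflection.toLinearEquiv o = -o :=
    (o.map_eq_neg_iff_det_neg _ (by simp [(Fact.out : finrank ℝ V = 2)])).2 (by simp [hK])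
  rw [← o.oangle_neg_orientation_eq_neg, ← hmap, o.oangle_map]
  simp

theorem oangle_reflection_right_of_mem {K : Submodule ℝ V} (hK : finrank ℝ Kᗮ = 1) {x : V}
    (hx : x ∈ K) (y : V) : o.oangle x (K.reflection y) = o.oangle y x := by
  rw [← (K.reflection_eq_self_iff x).2 hx, o.oangle_reflection_reflection hK, o.oangle_rev,
    neg_neg, K.reflection_eq_self_iff x |>.2 hx]

end Orientation

namespace EuclideanGeometry

variable {V P : Type*} [NormedAddCommGroup V] [InnerProductSpace ℝ V] [MetricSpace P]
  [NormedAddTorsor V P] [Fact (finrank ℝ V = 2)]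

theorem finrank_orthogonal_direction_line {p q : P} (h : p ≠ q) :
    finrank ℝ (line[ℝ, p, q]).directionᗮ = 1 := by
  rw [direction_affineSpan, vectorSpan_pair]
  exact Submodule.finrank_orthogonal_span_singleton (vsub_ne_zero.2 h)

theorem reflection_ne_of_mem {s : AffineSubspace ℝ P} [Nonempty s] {p q : P} (hp : p ∈ s)
    (hq : q ≠ p) : reflection s q ≠ p := fun h =>
  hq <| (reflection s).injective <| h.trans ((reflection_eq_self_iff p).2 hp).symm

section Oriented

variable [Module.Oriented ℝ V (Fin 2)]

theorem oangle_reflection_right_of_mem {s : AffineSubspace ℝ P} [Nonempty s]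
    (hs : finrank ℝ s.directionᗮ = 1) {p q : P} (hp : p ∈ s) (hq : q ∈ s) (r : P) :
    ∡ q p (reflection s r) = ∡ r p q := by
  rw [oangle, oangle, reflection_apply_of_mem s r hp, vadd_vsub]
  exact positiveOrientation.oangle_reflection_right_of_mem hs (s.vsub_mem_direction hq hp) _

theorem oangle_reflection_line_reflection_line {A B C H : P} (hB : B ≠ A) (hC : C ≠ A)
    (hH : H ≠ A) :
    ∡ (reflection line[ℝ, C, A] H) A (reflection line[ℝ, A, B] H) = (2 : ℕ) • ∡ C A B := by
  have hCA : finrank ℝ (line[ℝ, C, A]).directionᗮ = 1 := finrank_orthogonal_direction_line hC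
  have hAB : finrank ℝ (line[ℝ, A, B]).directionᗮ = 1 :=
    finrank_orthogonal_direction_line hB.symm
  have hB' := reflection_ne_of_mem (left_mem_affineSpan_pair ℝ A B) hH
  have hC' := reflection_ne_of_mem (right_mem_affineSpan_pair ℝ C A) hH
  rw [← oangle_add hC' hC hB', ← oangle_add hC hB hB', oangle_rev,
    oangle_reflection_right_of_mem hCA (right_mem_affineSpan_pair ℝ C A)
      (left_mem_affineSpan_pair ℝ C A),
    oangle_reflection_right_of_mem hAB (left_mem_affineSpan_pair ℝ A B)
      (right_mem_affineSpan_pair ℝ A B), ← oangle_add hC hH hB, oangle_rev H]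
  abel

end Oriented

theorem angle_reflection_line_reflection_line {A B C H : P} (hB : B ≠ A) (hC : C ≠ A)
    (hH : H ≠ A) (hA : ∠ C A B < π / 2) :
    ∠ (reflection line[ℝ, C, A] H) A (reflection line[ℝ, A, B] H) = 2 * ∠ C A B := by
  let _ : Module.Oriented ℝ V (Fin 2) := ⟨(finBasisOfFinrankEq ℝ V Fact.out).orientation⟩
  have hB' := reflection_ne_of_mem (left_mem_affineSpan_pair ℝ A B) hH
  have hC' := reflection_ne_of_mem (right_mem_affineSpan_pair ℝ C A) hH
  rw [angle_eq_abs_oangle_toReal hC hB] at hA ⊢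
  have hA' := abs_lt.1 hA
  rw [angle_eq_abs_oangle_toReal hC' hB', oangle_reflection_line_reflection_line hB hC hH,
    Real.Angle.two_nsmul_toReal_eq_two_mul.2 ⟨by linarith, by linarith⟩, abs_mul, abs_two]

end EuclideanGeometry

theorem stmt2_general
    (A B C H B' C' : EuclideanSpace ℝ (Fin 2))

    (hacute : ∠ C A B < π / 2 ∧ ∠ A B C < π / 2 ∧ ∠ B C A < π / 2)
    (hH₂ : ⟪B - H, C - A⟫ = (0:ℝ))
    (hB' : B' = EuclideanGeometry.reflection (affineSpan ℝ {C, A}) H)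
    (hC' : C' = EuclideanGeometry.reflection (affineSpan ℝ {A, B}) H) :
    ∠ B' A C' = 2 * ∠ B A C := by
  have := Fact.mk (finrank_euclideanSpace_fin (𝕜 := ℝ) (n := 2))
  have hA := hacute.1
  have hB : B ≠ A := by rintro rfl; simp at hA
  have hC : C ≠ A := by rintro rfl; simp at hA
  have hH : H ≠ A := by
    rintro rfl
    rw [angle_comm] at hA
    exact hA.ne ((InnerProductGeometry.inner_eq_zero_iff_angle_eq_pi_div_two _ _).1 hH₂)
  rw [hB', hC', angle_comm B]
  exact angle_reflection_line_reflection_line hB hC hH hA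

theorem stmt2
    (A B C H B' C' : EuclideanSpace ℝ (Fin 2))

    (hacute : ∠ C A B < π / 2 ∧ ∠ A B C < π / 2 ∧ ∠ B C A < π / 2)
    (hH₁ : ⟪A - H, B - C⟫ = (0:ℝ)) (hH₂ : ⟪B - H, C - A⟫ = (0:ℝ))
    (hH₃ : ⟪C - H, A - B⟫ = (0:ℝ))
    (hB' : B' = EuclideanGeometry.reflection (affineSpan ℝ {C, A}) H)
    (hC' : C' = EuclideanGeometry.reflection (affineSpan ℝ {A, B}) H) :
    ∠ B' A C' = 2 * ∠ B A C :=
  stmt2_general A B C H B' C' hacute hH₂ hB' hC'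
end

section
/- Let ABC be an acute triangle with orthocenter H, let A', B', C' be the reflections of H over BC, CA, AB, and let X be the reflection of A over the line B'C'. Then the distance AX = 2·AH·cos(∠BAC). -/
/-!
Put `u = H - A`. The lines `CA` and `AB` pass through `A`, so `B' - A` and `C' - A` are the
reflections of `u` in the directions `C - A` and `B - A`; in particular `AB' = AC' = AH`, so the
foot of the perpendicular from `A` to `B'C'` is the midpoint `M` of `B'C'` and `AX = 2 AM`.
Expanding `‖2 (M - A)‖²` and using that the Gram determinant of three vectors in a plane vanishes
gives `AM = AH |cos ∠BAC|`, and the angle at `A` is acute.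
-/

open EuclideanGeometry Real RealInnerProductSpace Module

variable {V P : Type*} [NormedAddCommGroup V] [InnerProductSpace ℝ V] [MetricSpace P]
  [NormedAddTorsor V P]

theorem inner_gram_det_eq_zero_of_finrank_eq_two (hV : finrank ℝ V = 2) (u b c : V) :
    ⟪u, u⟫ * ⟪b, b⟫ * ⟪c, c⟫ + 2 * ⟪u, b⟫ * ⟪b, c⟫ * ⟪c, u⟫ =
      ⟪u, u⟫ * ⟪b, c⟫ ^ 2 + ⟪b, b⟫ * ⟪c, u⟫ ^ 2 + ⟪c, c⟫ * ⟪u, b⟫ ^ 2 := by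
  have : FiniteDimensional ℝ V := Module.finite_of_finrank_eq_succ hV
  let e := (stdOrthonormalBasis ℝ V).reindex (finCongr hV)
  have coord (x y : V) : ⟪x, y⟫ = ⟪x, e 0⟫ * ⟪y, e 0⟫ + ⟪x, e 1⟫ * ⟪y, e 1⟫ := by
    rw [← e.sum_inner_mul_inner x y, Fin.sum_univ_two, real_inner_comm (e 0) y,
      real_inner_comm (e 1) y]
  rw [coord u u, coord b b, coord c c, coord u b, coord b c, coord c u]
  ring

theorem norm_reflection_singleton_add_reflection_singleton (hV : finrank ℝ V = 2) {b c : V}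
    (hb : b ≠ 0) (hc : c ≠ 0) (u : V) :
    ‖(ℝ ∙ b).reflection u + (ℝ ∙ c).reflection u‖ =
      2 * ‖u‖ * |cos (InnerProductGeometry.angle b c)| := by
  have hb' : ‖b‖ ≠ 0 := norm_ne_zero_iff.mpr hb
  have hc' : ‖c‖ ≠ 0 := norm_ne_zero_iff.mpr hc
  have hgram := inner_gram_det_eq_zero_of_finrank_eq_two hV u b c
  rw [← sq_eq_sq₀ (norm_nonneg _) (by positivity), mul_pow, mul_pow, sq_abs,
    InnerProductGeometry.cos_angle, ← real_inner_self_eq_norm_sq, Submodule.reflection_singleton_apply,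
    Submodule.reflection_singleton_apply]
  simp only [RCLike.ofReal_real_eq_id, id, two_smul, inner_add_left, inner_add_right,
    inner_sub_left, inner_sub_right, real_inner_smul_left, real_inner_smul_right,
    real_inner_self_eq_norm_sq, norm_smul, Real.norm_eq_abs, mul_pow, sq_abs, real_inner_comm u,
    real_inner_comm b c] at hgram ⊢
  field_simp
  linear_combination 4 * hgram

theorem EuclideanGeometry.reflection_vsub_eq_reflection_span {s : AffineSubspace ℝ P} [Nonempty s]
    [s.direction.HasOrthogonalProjection] {p : P} (hp : p ∈ s) {v : V}
    (hs : s.direction = ℝ ∙ v) (x : P) :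
    reflection s x -ᵥ p = (ℝ ∙ v).reflection (x -ᵥ p) := by
  rw [reflection_apply_of_mem s x hp, vadd_vsub]
  congr!

theorem EuclideanGeometry.dist_reflection_affineSpan_pair_self_of_dist_eq {p p₁ p₂ : P}
    (h : dist p p₁ = dist p p₂) :
    dist p (reflection line[ℝ, p₁, p₂] p) = 2 * dist p (midpoint ℝ p₁ p₂) := by
  set m := midpoint ℝ p₁ p₂
  have hm : m ∈ line[ℝ, p₁, p₂] := AffineMap.lineMap_mem_affineSpan_pair _ _ _
  have hperp : p -ᵥ m ∈ (line[ℝ, p₁, p₂]).directionᗮ := by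
    rw [direction_affineSpan, vectorSpan_pair_rev,
      Submodule.mem_orthogonal_singleton_iff_inner_right, ← AffineSubspace.mem_perpBisector_iff_inner_eq_zero']
    exact AffineSubspace.mem_perpBisector_iff_dist_eq.mpr h
  rw [← vsub_vadd p m, reflection_orthogonal_vadd hm hperp, vsub_vadd, dist_comm,
    dist_eq_norm_vsub V, vadd_vsub_assoc, neg_vsub_eq_vsub_rev, ← two_smul ℝ, norm_smul,
    Real.norm_two, dist_eq_norm_vsub' V]

theorem EuclideanGeometry.dist_midpoint_reflection_reflection (hV : finrank ℝ V = 2) {A B C : P}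
    (hB : B ≠ A) (hC : C ≠ A) (H : P) :
    dist A (midpoint ℝ (reflection line[ℝ, C, A] H) (reflection line[ℝ, A, B] H)) =
      dist A H * |cos (∠ B A C)| := by
  rw [dist_comm, dist_eq_norm_vsub V, midpoint_vsub,
    reflection_vsub_eq_reflection_span (right_mem_affineSpan_pair ℝ C A)
      (by rw [direction_affineSpan, vectorSpan_pair]),
    reflection_vsub_eq_reflection_span (left_mem_affineSpan_pair ℝ A B)
      (by rw [direction_affineSpan, vectorSpan_pair_rev]),
    ← smul_add, norm_smul, norm_reflection_singleton_add_reflection_singleton hV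
      (vsub_ne_zero.mpr hC) (vsub_ne_zero.mpr hB), ← EuclideanGeometry.angle, angle_comm B,
    dist_comm, dist_eq_norm_vsub V]
  simp only [invOf_eq_inv, norm_inv, Real.norm_ofNat]
  ring

theorem stmt5_general
    (A B C H B' C' X : EuclideanSpace ℝ (Fin 2))

    (hacute : ∠ C A B < π / 2 ∧ ∠ A B C < π / 2 ∧ ∠ B C A < π / 2)
    (hB' : B' = EuclideanGeometry.reflection (affineSpan ℝ {C, A}) H)
    (hC' : C' = EuclideanGeometry.reflection (affineSpan ℝ {A, B}) H)
    (hX : X = EuclideanGeometry.reflection (affineSpan ℝ {B', C'}) A) :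
    dist A X = 2 * dist A H * Real.cos (∠ B A C) := by
  have hB : B ≠ A := by
    rintro rfl
    simpa [angle_self_right] using hacute.1
  have hC : C ≠ A := by
    rintro rfl
    simpa [angle_self_left] using hacute.1
  have hcos : 0 ≤ cos (∠ B A C) := by
    rw [angle_comm]
    exact cos_nonneg_of_mem_Icc ⟨by linarith [angle_nonneg C A B], hacute.1.le⟩
  have hdist : dist A B' = dist A C' := by
    rw [hB', hC', dist_reflection_eq_of_mem _ (right_mem_affineSpan_pair ℝ C A),
      dist_reflection_eq_of_mem _ (left_mem_affineSpan_pair ℝ A B)]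
  rw [hX, dist_reflection_affineSpan_pair_self_of_dist_eq hdist, hB', hC',
    dist_midpoint_reflection_reflection finrank_euclideanSpace_fin hB hC, abs_of_nonneg hcos]
  ring

theorem stmt5
    (A B C H A' B' C' X : EuclideanSpace ℝ (Fin 2))

    (hacute : ∠ C A B < π / 2 ∧ ∠ A B C < π / 2 ∧ ∠ B C A < π / 2)
    (hH₁ : ⟪A - H, B - C⟫ = (0:ℝ)) (hH₂ : ⟪B - H, C - A⟫ = (0:ℝ))
    (hH₃ : ⟪C - H, A - B⟫ = (0:ℝ))
    (hA' : A' = EuclideanGeometry.reflection (affineSpan ℝ {B, C}) H)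
    (hB' : B' = EuclideanGeometry.reflection (affineSpan ℝ {C, A}) H)
    (hC' : C' = EuclideanGeometry.reflection (affineSpan ℝ {A, B}) H)
    (hX : X = EuclideanGeometry.reflection (affineSpan ℝ {B', C'}) A) :
    dist A X = 2 * dist A H * Real.cos (∠ B A C) :=
  stmt5_general A B C H B' C' X hacute hB' hC' hX
end

section
/- Let ABC be an acute triangle with orthocenter H, let A', B', C' be the reflections of H over BC, CA, AB respectively, and let X, Y, Z be the reflections of A, B, C over the lines B'C', C'A', A'B' respectively. Then the line XH is perpendicular to the line YZ. -/
/-!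
Put the circumcenter `O` at the origin of the complex plane. Each of the conditions `CH ⟂ AB`,
`AH ⟂ BC` says that `O := (A + B + C - H) / 2` is equidistant from two vertices, so `a, b, c`
lie on a circle `|z|² = s` and `h = a + b + c`. Reflection in a chord `uv` of that circle is
`z ↦ u + v - u v z̄ / s`, which gives `A' = -bc/a`, `B' = -ca/b`, `C' = -ab/c` on the circle and
then `X = -(a + ca/b + ab/c)`. With `w = (ab + bc + ca)/(bc)` one finds `H - X = (b + c) w` and
`Z - Y = (b - c) w`; since `|b| = |c|`, the vectors `b + c` and `b - c` are orthogonal.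
Acuteness keeps the chords `B'C'`, `C'A'`, `A'B'` nondegenerate: `B' = C'` iff `b² = c²`.
-/

open EuclideanGeometry Real RealInnerProductSpace ComplexConjugate

section

variable {V P V₂ P₂ : Type*} [NormedAddCommGroup V] [InnerProductSpace ℝ V] [MetricSpace P]
  [NormedAddTorsor V P] [NormedAddCommGroup V₂] [InnerProductSpace ℝ V₂] [MetricSpace P₂]
  [NormedAddTorsor V₂ P₂]

theorem EuclideanGeometry.reflection_eq_of_midpoint_mem {s : AffineSubspace ℝ P} [Nonempty s]
    [s.direction.HasOrthogonalProjection] {p q : P} (hm : midpoint ℝ p q ∈ s)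
    (hpq : q -ᵥ p ∈ s.directionᗮ) : reflection s p = q := by
  have hproj : (orthogonalProjection s p : P) = midpoint ℝ p q := by
    refine coe_orthogonalProjection_eq_iff_mem.2 ⟨hm, ?_⟩
    rw [left_vsub_midpoint, ← neg_vsub_eq_vsub_rev]
    exact Submodule.smul_mem _ _ (Submodule.neg_mem _ hpq)
  rw [reflection_apply', hproj, midpoint_vsub_left, midpoint, AffineMap.lineMap_apply,
    vadd_vadd, ← add_smul]
  norm_num

theorem EuclideanGeometry.inner_pos_of_angle_lt_pi_div_two {p q r : P} (h : ∠ p q r < π / 2) :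
    0 < ⟪p -ᵥ q, r -ᵥ q⟫ := by
  rw [EuclideanGeometry.angle, InnerProductGeometry.angle, Real.arccos_lt_pi_div_two] at h
  by_contra! hle
  exact h.not_ge (div_nonpos_of_nonpos_of_nonneg hle (by positivity))

theorem AffineIsometryEquiv.reflection_affineSpan_pair_map (f : P ≃ᵃⁱ[ℝ] P₂) (p q x : P) :
    f (reflection (affineSpan ℝ {p, q}) x) = reflection (affineSpan ℝ {f p, f q}) (f x) := by
  have hmap : (affineSpan ℝ {p, q}).map f.toAffineIsometry.toAffineMap
      = affineSpan ℝ {f p, f q} := by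
    rw [AffineSubspace.map_span, Set.image_pair]
    rfl
  exact (reflection_map _ f.toAffineIsometry x).symm.trans (eq_reflection_of_eq_subspace hmap _)

theorem AffineIsometryEquiv.inner_map_sub_map_sub (f : V ≃ᵃⁱ[ℝ] V₂) (p q r t : V) :
    ⟪f p - f q, f r - f t⟫ = ⟪p - q, r - t⟫ := by
  simp only [← vsub_eq_sub, ← f.map_vsub, LinearIsometryEquiv.inner_map_map]

theorem norm_eq_norm_of_inner_sub_eq_zero {a b c h : V} (hh : h = a + b + c)
    (hperp : ⟪c - h, a - b⟫ = 0) : ‖a‖ = ‖b‖ := by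
  rwa [hh, show c - (a + b + c) = -(a + b) by abel, inner_neg_left, neg_eq_zero,
    real_inner_add_sub_eq_zero_iff] at hperp

end

namespace Complex

theorem reflection_affineSpan_pair {u v : ℂ} (h : u ≠ v) (z : ℂ) :
    reflection (affineSpan ℝ {u, v}) z = u + (v - u) * conj ((z - u) / (v - u)) := by
  set w := (z - u) / (v - u)
  have hz : z = u + (v - u) * w := by
    have : v - u ≠ 0 := sub_ne_zero.2 h.symm
    simp only [w]
    field_simp
    ring
  apply reflection_eq_of_midpoint_mem
  · convert AffineMap.lineMap_mem_affineSpan_pair w.re u v using 1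
    rw [midpoint_eq_smul_add, AffineMap.lineMap_apply, vsub_eq_sub, vadd_eq_add, real_smul,
      real_smul, re_eq_add_conj, hz, invOf_eq_inv]
    push_cast
    ring
  · rw [direction_affineSpan, vectorSpan_pair, Submodule.mem_orthogonal_singleton_iff_inner_right,
      Complex.inner, vsub_eq_sub, vsub_eq_sub, hz]
    simp only [mul_re, sub_re, add_re, sub_im, add_im, mul_im, conj_re, conj_im]
    ring

theorem conj_eq_norm_sq_div (z : ℂ) : conj z = ‖z‖ ^ 2 / z := by
  rcases eq_or_ne z 0 with rfl | hz
  · simp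
  · rw [eq_div_iff hz, mul_comm, mul_conj']

theorem inner_mul_mul_eq_normSq_mul (x y w : ℂ) : ⟪x * w, y * w⟫ = normSq w * ⟪x, y⟫ := by
  simp only [Complex.inner, map_mul, mul_re, conj_re, conj_im, mul_im, normSq_apply]
  ring

section Circle

variable {s u v a b c : ℂ}

theorem ne_zero_of_conj_eq_div (hu0 : u ≠ 0) (hu : conj u = s / u) : s ≠ 0 := by
  rintro rfl
  rw [zero_div, map_eq_zero] at hu
  exact hu0 hu

/-- Reflection in a chord `uv` of the circle `z z̄ = s` centred at `0`. -/
theorem reflection_affineSpan_pair_of_conj_eq_div (h : u ≠ v) (hu0 : u ≠ 0) (hv0 : v ≠ 0)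
    (hu : conj u = s / u) (hv : conj v = s / v) (z : ℂ) :
    reflection (affineSpan ℝ {u, v}) z = u + v - u * v * conj z / s := by
  have hs := ne_zero_of_conj_eq_div hu0 hu
  have huv : u - v ≠ 0 := sub_ne_zero.2 h
  rw [reflection_affineSpan_pair h, map_div₀, map_sub, map_sub, hu, hv]
  field_simp
  ring

theorem conj_neg_mul_div_eq_div (ha : conj a = s / a) (hb : conj b = s / b)
    (hc : conj c = s / c) : conj (-(a * b / c)) = s / -(a * b / c) := by
  rw [map_neg, map_div₀, map_mul, ha, hb, hc]
  rcases eq_or_ne s 0 with rfl | hs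
  · simp
  · field_simp

theorem reflection_add_add_affineSpan_pair (ha0 : a ≠ 0) (hb0 : b ≠ 0) (hc0 : c ≠ 0)
    (hbc : b ≠ c) (ha : conj a = s / a) (hb : conj b = s / b) (hc : conj c = s / c) :
    reflection (affineSpan ℝ {b, c}) (a + b + c) = -(b * c / a) := by
  have hs := ne_zero_of_conj_eq_div ha0 ha
  rw [reflection_affineSpan_pair_of_conj_eq_div hbc hb0 hc0 hb hc, map_add, map_add, ha, hb, hc]
  field_simp
  ring

theorem reflection_affineSpan_pair_neg_mul_div (ha0 : a ≠ 0) (hb0 : b ≠ 0) (hc0 : c ≠ 0)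
    (hbc : b ^ 2 ≠ c ^ 2) (ha : conj a = s / a) (hb : conj b = s / b) (hc : conj c = s / c) :
    reflection (affineSpan ℝ {-(c * a / b), -(a * b / c)}) a = -(a + c * a / b + a * b / c) := by
  have hs := ne_zero_of_conj_eq_div ha0 ha
  have hne : -(c * a / b) ≠ -(a * b / c) := by
    intro h
    field_simp at h
    exact hbc (by linear_combination h)
  rw [reflection_affineSpan_pair_of_conj_eq_div hne (by simp [*]) (by simp [*])
    (conj_neg_mul_div_eq_div hc ha hb) (conj_neg_mul_div_eq_div ha hb hc), ha]
  field_simp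
  ring

end Circle

theorem inner_add_mul_sub_mul_eq_zero {b c : ℂ} (hbc : ‖b‖ = ‖c‖) (w : ℂ) :
    ⟪(b + c) * w, (b - c) * w⟫ = 0 := by
  rw [inner_mul_mul_eq_normSq_mul, (real_inner_add_sub_eq_zero_iff b c).2 hbc, mul_zero]

theorem sq_ne_sq_of_inner_pos {a b c : ℂ} (hab : ‖a‖ = ‖b‖) (hA : 0 < ⟪c - a, b - a⟫)
    (hB : 0 < ⟪a - b, c - b⟫) : b ^ 2 ≠ c ^ 2 := by
  rw [Ne, sq_eq_sq_iff_eq_or_eq_neg]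
  rintro (h | h)
  · rw [h, sub_self, inner_zero_right] at hB
    exact hB.false
  · rw [← neg_eq_iff_eq_neg.2 h, show -b - a = -(a + b) by ring, show b - a = -(a - b) by ring,
      inner_neg_neg, (real_inner_add_sub_eq_zero_iff a b).2 hab] at hA
    exact hA.false

theorem inner_orthocenter_sub_reflection_eq_zero {a b c a' b' c' x y z : ℂ}
    (hab : ‖a‖ = ‖b‖) (hbc : ‖b‖ = ‖c‖) (hA : b ^ 2 ≠ c ^ 2) (hB : c ^ 2 ≠ a ^ 2)
    (hC : a ^ 2 ≠ b ^ 2)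
    (ha' : a' = reflection (affineSpan ℝ {b, c}) (a + b + c))
    (hb' : b' = reflection (affineSpan ℝ {c, a}) (a + b + c))
    (hc' : c' = reflection (affineSpan ℝ {a, b}) (a + b + c))
    (hx : x = reflection (affineSpan ℝ {b', c'}) a)
    (hy : y = reflection (affineSpan ℝ {c', a'}) b)
    (hz : z = reflection (affineSpan ℝ {a', b'}) c) :
    ⟪a + b + c - x, z - y⟫ = 0 := by
  have ha0 : a ≠ 0 := by
    rintro rfl
    exact hC (by rw [norm_eq_zero.1 (hab.symm.trans norm_zero)])
  have hb0 : b ≠ 0 := norm_ne_zero_iff.1 (hab ▸ norm_ne_zero_iff.2 ha0)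
  have hc0 : c ≠ 0 := norm_ne_zero_iff.1 (hbc ▸ norm_ne_zero_iff.2 hb0)
  have ha : conj a = (‖a‖ ^ 2 : ℂ) / a := conj_eq_norm_sq_div a
  have hb : conj b = (‖a‖ ^ 2 : ℂ) / b := by rw [conj_eq_norm_sq_div, hab]
  have hc : conj c = (‖a‖ ^ 2 : ℂ) / c := by rw [conj_eq_norm_sq_div, hab, hbc]
  have hA' : a' = -(b * c / a) := ha'.trans
    (reflection_add_add_affineSpan_pair ha0 hb0 hc0 (ne_of_apply_ne (· ^ 2) hA) ha hb hc)
  have hB' : b' = -(c * a / b) := by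
    rw [hb', show a + b + c = b + c + a by ring]
    exact reflection_add_add_affineSpan_pair hb0 hc0 ha0 (ne_of_apply_ne (· ^ 2) hB) hb hc ha
  have hC' : c' = -(a * b / c) := by
    rw [hc', show a + b + c = c + a + b by ring]
    exact reflection_add_add_affineSpan_pair hc0 ha0 hb0 (ne_of_apply_ne (· ^ 2) hC) hc ha hb
  subst hA' hB' hC'
  rw [hx, hy, hz, reflection_affineSpan_pair_neg_mul_div ha0 hb0 hc0 hA ha hb hc,
    reflection_affineSpan_pair_neg_mul_div hb0 hc0 ha0 hB hb hc ha,
    reflection_affineSpan_pair_neg_mul_div hc0 ha0 hb0 hC hc ha hb]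
  have hHX : a + b + c - -(a + c * a / b + a * b / c)
      = (b + c) * ((a * b + b * c + c * a) / (b * c)) := by
    field_simp
    ring
  have hZY : -(c + b * c / a + c * a / b) - -(b + a * b / c + b * c / a)
      = (b - c) * ((a * b + b * c + c * a) / (b * c)) := by
    field_simp
    ring
  rw [hHX, hZY]
  exact inner_add_mul_sub_mul_eq_zero hbc _

end Complex

theorem stmt6_general
    (A B C H A' B' C' X Y Z : EuclideanSpace ℝ (Fin 2))

    (hacute : ∠ C A B < π / 2 ∧ ∠ A B C < π / 2 ∧ ∠ B C A < π / 2)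
    (hH₁ : ⟪A - H, B - C⟫ = (0:ℝ))
    (hH₃ : ⟪C - H, A - B⟫ = (0:ℝ))
    (hA' : A' = EuclideanGeometry.reflection (affineSpan ℝ {B, C}) H)
    (hB' : B' = EuclideanGeometry.reflection (affineSpan ℝ {C, A}) H)
    (hC' : C' = EuclideanGeometry.reflection (affineSpan ℝ {A, B}) H)
    (hX : X = EuclideanGeometry.reflection (affineSpan ℝ {B', C'}) A)
    (hY : Y = EuclideanGeometry.reflection (affineSpan ℝ {C', A'}) B)
    (hZ : Z = EuclideanGeometry.reflection (affineSpan ℝ {A', B'}) C) :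
    ⟪H - X, Z - Y⟫ = (0:ℝ) := by
  let f : EuclideanSpace ℝ (Fin 2) ≃ᵃⁱ[ℝ] ℂ :=
    (AffineIsometryEquiv.vaddConst ℝ ((2⁻¹ : ℝ) • (A + B + C - H))).symm.trans
      Complex.orthonormalBasisOneI.repr.symm.toAffineIsometryEquiv
  have hfH : f H = f A + f B + f C := by
    simp only [f, AffineIsometryEquiv.coe_trans, Function.comp_apply,
      AffineIsometryEquiv.coe_vaddConst_symm, vsub_eq_sub,
      LinearIsometryEquiv.coe_toAffineIsometryEquiv, ← map_add]
    congr 1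
    module
  have hpos {p q r} (h : ∠ p q r < π / 2) : 0 < ⟪f p - f q, f r - f q⟫ := by
    rw [f.inner_map_sub_map_sub]
    exact inner_pos_of_angle_lt_pi_div_two h
  have hab : ‖f A‖ = ‖f B‖ := norm_eq_norm_of_inner_sub_eq_zero hfH
    (f.inner_map_sub_map_sub C H A B ▸ hH₃)
  have hbc : ‖f B‖ = ‖f C‖ := norm_eq_norm_of_inner_sub_eq_zero (by rw [hfH]; abel)
    (f.inner_map_sub_map_sub A H B C ▸ hH₁)
  obtain ⟨hA, hB, hC⟩ := And.imp hpos (And.imp hpos hpos) hacute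
  have key := Complex.inner_orthocenter_sub_reflection_eq_zero (a' := f A') (b' := f B')
    (c' := f C') (x := f X) (y := f Y) (z := f Z) hab hbc
    (Complex.sq_ne_sq_of_inner_pos hab hA hB) (Complex.sq_ne_sq_of_inner_pos hbc hB hC)
    (Complex.sq_ne_sq_of_inner_pos (hab.trans hbc).symm hC hA)
    (by rw [hA', f.reflection_affineSpan_pair_map, hfH])
    (by rw [hB', f.reflection_affineSpan_pair_map, hfH])
    (by rw [hC', f.reflection_affineSpan_pair_map, hfH])
    (by rw [hX, f.reflection_affineSpan_pair_map])
    (by rw [hY, f.reflection_affineSpan_pair_map])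
    (by rw [hZ, f.reflection_affineSpan_pair_map])
  rwa [← hfH, f.inner_map_sub_map_sub] at key

theorem stmt6
    (A B C H A' B' C' X Y Z : EuclideanSpace ℝ (Fin 2))

    (hacute : ∠ C A B < π / 2 ∧ ∠ A B C < π / 2 ∧ ∠ B C A < π / 2)
    (hH₁ : ⟪A - H, B - C⟫ = (0:ℝ)) (hH₂ : ⟪B - H, C - A⟫ = (0:ℝ))
    (hH₃ : ⟪C - H, A - B⟫ = (0:ℝ))
    (hA' : A' = EuclideanGeometry.reflection (affineSpan ℝ {B, C}) H)
    (hB' : B' = EuclideanGeometry.reflection (affineSpan ℝ {C, A}) H)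
    (hC' : C' = EuclideanGeometry.reflection (affineSpan ℝ {A, B}) H)
    (hX : X = EuclideanGeometry.reflection (affineSpan ℝ {B', C'}) A)
    (hY : Y = EuclideanGeometry.reflection (affineSpan ℝ {C', A'}) B)
    (hZ : Z = EuclideanGeometry.reflection (affineSpan ℝ {A', B'}) C) :
    ⟪H - X, Z - Y⟫ = (0:ℝ) :=
  stmt6_general A B C H A' B' C' X Y Z hacute hH₁ hH₃ hA' hB' hC' hX hY hZ
end

section
/- Let ABC be a triangle inscribed in a circle with incenter I, and let A', B', C' be the second intersection points of the angle bisectors AI, BI, CI with the circumcircle. Then the lines A'I and B'C' are perpendicular. -/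
/-!
Work with oriented angles modulo `π`, i.e. with doubled oriented angles. Turning from line `AI`
to line `B'C'` through the line `BI = BB'` gives `2∡(AI, B'C') = 2∡AIB + 2∡BB'C'`. The angle sums
of the triangles `ABI` and `ABC`, with the angles at `A` and `B` halved by `I`, give
`2∡AIB = ∡ACB + π`; inscribed angles and the bisector at `C` give
`2∡BB'C' = 2∡BCC' = 2∡BCI = ∡BCA`. Hence `2∡(AI, B'C') = π`, and `A'` lies on `AI`.
-/

open EuclideanGeometry Real RealInnerProductSpace

theorem Orientation.oangle_eq_oangle_of_angle_eq {V : Type*} [NormedAddCommGroup V]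
    [InnerProductSpace ℝ V] [Fact (Module.finrank ℝ V = 2)] (o : Orientation ℝ V (Fin 2))
    {u v w : V} (huw : o.oangle u w ≠ 0)
    (h : InnerProductGeometry.angle u v = InnerProductGeometry.angle v w) :
    o.oangle u v = o.oangle v w := by
  have hu := o.left_ne_zero_of_oangle_ne_zero huw
  have hw := o.right_ne_zero_of_oangle_ne_zero huw
  rcases eq_or_ne v 0 with rfl | hv
  · simp
  rw [o.angle_eq_abs_oangle_toReal hu hv, o.angle_eq_abs_oangle_toReal hv hw] at h
  rcases abs_eq_abs.mp h with h | h
  · exact Real.Angle.toReal_injective h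
  · refine absurd ?_ huw
    rw [← o.oangle_add hu hv hw, ← Real.Angle.coe_toReal (o.oangle u v), h,
      Real.Angle.coe_neg, Real.Angle.coe_toReal, neg_add_cancel]

namespace EuclideanGeometry

variable {V P : Type*} [NormedAddCommGroup V] [InnerProductSpace ℝ V] [MetricSpace P]
  [NormedAddTorsor V P]

theorem inner_vsub_eq_zero_of_mem_affineSpan_pair {p₁ p₂ q : P} {v : V}
    (h : ⟪p₂ -ᵥ p₁, v⟫ = 0) (hq : q ∈ line[ℝ, p₁, p₂]) : ⟪q -ᵥ p₂, v⟫ = 0 := by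
  have hdir : q -ᵥ p₂ ∈ vectorSpan ℝ {p₁, p₂} := by
    rw [← direction_affineSpan]
    exact AffineSubspace.vsub_mem_direction hq (right_mem_affineSpan_pair ℝ p₁ p₂)
  obtain ⟨r, hr⟩ := mem_vectorSpan_pair.mp hdir
  rw [← hr, ← neg_vsub_eq_vsub_rev, inner_smul_left, inner_neg_left, h]
  simp

section Oriented

variable [Fact (Module.finrank ℝ V = 2)] [Module.Oriented ℝ V (Fin 2)]

theorem oangle_eq_oangle_of_angle_eq {A B C I : P} (hBAC : ∡ B A C ≠ 0)
    (h : ∠ B A I = ∠ I A C) : ∡ B A I = ∡ I A C :=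
  positiveOrientation.oangle_eq_oangle_of_angle_eq hBAC h

theorem oangle_eq_two_zsmul_oangle_of_oangle_eq {A B C I : P} (hBA : B ≠ A) (hCA : C ≠ A)
    (hIA : I ≠ A) (h : ∡ B A I = ∡ I A C) : ∡ B A C = (2 : ℤ) • ∡ B A I := by
  rw [← oangle_add hBA hIA hCA, ← h, two_zsmul]

/-- Doubled form of `∠ A I B = π / 2 + ∠ A C B / 2` for the incenter `I`. -/
theorem two_zsmul_oangle_eq_oangle_add_pi_of_oangle_eq {A B C I : P} (hBA : B ≠ A) (hCA : C ≠ A)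
    (hCB : C ≠ B) (hIA : I ≠ A) (hIB : I ≠ B) (hA : ∡ B A I = ∡ I A C)
    (hB : ∡ A B I = ∡ I B C) : (2 : ℤ) • ∡ A I B = ∡ A C B + π := by
  have hsumABI := oangle_add_oangle_add_oangle_eq_pi hIA hIB.symm hBA.symm
  have hsumABC := oangle_add_oangle_add_oangle_eq_pi hBA.symm hCA hCB.symm
  have hBAC := oangle_eq_two_zsmul_oangle_of_oangle_eq hBA hCA hIA hA
  have hCBA : ∡ C B A = (2 : ℤ) • ∡ I B A := by
    rw [oangle_rev, oangle_eq_two_zsmul_oangle_of_oangle_eq hBA.symm hCB hIB hB, oangle_rev I,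
      smul_neg, neg_neg]
  have hAIB : ∡ A I B = π - ∡ I B A - ∡ B A I := by rw [← hsumABI]; abel
  have hACB : ∡ A C B = π - ∡ B A C - ∡ C B A := by rw [← hsumABC]; abel
  rw [hAIB, hACB, hBAC, hCBA, smul_sub, smul_sub, Real.Angle.two_zsmul_coe_pi,
    ← Real.Angle.coe_pi_add_coe_pi]
  abel

theorem Sphere.two_zsmul_oangle_eq_oangle_of_oangle_eq {s : Sphere P} {A B C I B' C' : P}
    (hBs : B ∈ s) (hCs : C ∈ s) (hB's : B' ∈ s) (hC's : C' ∈ s) (hB'B : B' ≠ B)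
    (hB'C' : B' ≠ C') (hCB : C ≠ B) (hAC : A ≠ C) (hIC : I ≠ C) (hC'C : C' ≠ C)
    (hC'l : C' ∈ line[ℝ, C, I]) (hC : ∡ B C I = ∡ I C A) :
    (2 : ℤ) • ∡ B B' C' = ∡ B C A := by
  have hCIC' : Collinear ℝ {I, C, C'} := collinear_triple_of_mem_affineSpan_pair
    (right_mem_affineSpan_pair ℝ C I) (left_mem_affineSpan_pair ℝ C I) hC'l
  rw [Sphere.two_zsmul_oangle_eq hBs hB's hCs hC's hB'B hB'C' hCB hC'C.symm,
    ← hCIC'.two_zsmul_oangle_eq_right hIC hC'C,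
    oangle_eq_two_zsmul_oangle_of_oangle_eq hCB.symm hAC hIC hC]

theorem inner_vsub_vsub_eq_zero_of_oangle_eq {s : Sphere P} {A B C I B' C' : P}
    (hBA : B ≠ A) (hCA : C ≠ A) (hCB : C ≠ B) (hIA : I ≠ A) (hIB : I ≠ B) (hIC : I ≠ C)
    (hA : ∡ B A I = ∡ I A C) (hB : ∡ A B I = ∡ I B C) (hC : ∡ B C I = ∡ I C A)
    (hBs : B ∈ s) (hCs : C ∈ s) (hB's : B' ∈ s) (hC's : C' ∈ s) (hB'B : B' ≠ B)
    (hC'C : C' ≠ C) (hB'l : B' ∈ line[ℝ, B, I]) (hC'l : C' ∈ line[ℝ, C, I]) :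
    ⟪I -ᵥ A, B' -ᵥ C'⟫ = 0 := by
  rcases eq_or_ne B' C' with rfl | hB'C'
  · simp
  have hsplit : positiveOrientation.oangle (I -ᵥ A) (B' -ᵥ C') =
      ∡ A I B + ∡ I B B' + ∡ B B' C' := by
    rw [oangle, oangle, oangle, ← positiveOrientation.oangle_neg_neg (A -ᵥ I), ← positiveOrientation.oangle_neg_neg (B -ᵥ B'),
      neg_vsub_eq_vsub_rev, neg_vsub_eq_vsub_rev, neg_vsub_eq_vsub_rev, neg_vsub_eq_vsub_rev,
      positiveOrientation.oangle_add, positiveOrientation.oangle_add] <;> simp [hIA, hIB, hB'B, hB'C']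
  have hIBB' : (2 : ℤ) • ∡ I B B' = 0 :=
    Real.Angle.two_zsmul_eq_zero_iff.mpr <| oangle_eq_zero_or_eq_pi_iff_collinear.mpr <|
      collinear_triple_of_mem_affineSpan_pair
        (right_mem_affineSpan_pair ℝ B I) (left_mem_affineSpan_pair ℝ B I) hB'l
  have hright : (2 : ℤ) • positiveOrientation.oangle (I -ᵥ A) (B' -ᵥ C') = π := by
    rw [hsplit, smul_add, smul_add, hIBB',
      two_zsmul_oangle_eq_oangle_add_pi_of_oangle_eq hBA hCA hCB hIA hIB hA hB,
      Sphere.two_zsmul_oangle_eq_oangle_of_oangle_eq hBs hCs hB's hC's hB'B hB'C' hCB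
        hCA.symm hIC hC'C hC'l hC, oangle_rev B]
    abel
  exact positiveOrientation.eq_zero_or_oangle_eq_iff_inner_eq_zero.mp
    (Or.inr (Or.inr (Real.Angle.two_zsmul_eq_pi_iff.mp hright)))

end Oriented

theorem inner_vsub_vsub_eq_zero_of_angle_eq [Fact (Module.finrank ℝ V = 2)] {s : Sphere P}
    {A B C I B' C' : P} (hABC : AffineIndependent ℝ ![A, B, C]) (hIA : I ≠ A) (hIB : I ≠ B)
    (hIC : I ≠ C) (hA : ∠ B A I = ∠ I A C) (hB : ∠ A B I = ∠ I B C) (hC : ∠ B C I = ∠ I C A)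
    (hBs : B ∈ s) (hCs : C ∈ s) (hB's : B' ∈ s) (hC's : C' ∈ s) (hB'B : B' ≠ B)
    (hC'C : C' ≠ C) (hB'l : B' ∈ line[ℝ, B, I]) (hC'l : C' ∈ line[ℝ, C, I]) :
    ⟪I -ᵥ A, B' -ᵥ C'⟫ = 0 := by
  have : FiniteDimensional ℝ V := .of_fact_finrank_eq_two
  let : Module.Oriented ℝ V (Fin 2) :=
    ⟨(Module.finBasisOfFinrankEq ℝ V Fact.out).orientation⟩
  have hABC : (∡ A B C).sign ≠ 0 :=
    Real.Angle.sign_ne_zero_iff.mpr (oangle_ne_zero_and_ne_pi_iff_affineIndependent.mpr hABC)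
  have hBAC : (∡ B A C).sign ≠ 0 := by rwa [← oangle_swap₁₂_sign, Ne, SignType.neg_eq_zero_iff]
  have hBCA : (∡ B C A).sign ≠ 0 := by rwa [oangle_rotate_sign]
  exact inner_vsub_vsub_eq_zero_of_oangle_eq (left_ne_of_oangle_sign_ne_zero hBAC)
    (right_ne_of_oangle_sign_ne_zero hBAC) (right_ne_of_oangle_sign_ne_zero hABC) hIA hIB hIC
    (oangle_eq_oangle_of_angle_eq (Real.Angle.sign_ne_zero_iff.mp hBAC).1 hA)
    (oangle_eq_oangle_of_angle_eq (Real.Angle.sign_ne_zero_iff.mp hABC).1 hB)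
    (oangle_eq_oangle_of_angle_eq (Real.Angle.sign_ne_zero_iff.mp hBCA).1 hC)
    hBs hCs hB's hC's hB'B hC'C hB'l hC'l

end EuclideanGeometry

theorem stmt8
    (A B C I A' B' C' O : EuclideanSpace ℝ (Fin 2))
 (R : ℝ)
    (htri : AffineIndependent ℝ ![A, B, C])
    (hO : dist O A = R ∧ dist O B = R ∧ dist O C = R)
    (hIA : I ≠ A) (hIB : I ≠ B) (hIC : I ≠ C)
    (hI₁ : ∠ B A I = ∠ I A C) (hI₂ : ∠ A B I = ∠ I B C) (hI₃ : ∠ B C I = ∠ I C A)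
    (hA' : A' ≠ A ∧ dist O A' = R ∧ A' ∈ affineSpan ℝ ({A, I} : Set (EuclideanSpace ℝ (Fin 2))))
    (hB' : B' ≠ B ∧ dist O B' = R ∧ B' ∈ affineSpan ℝ ({B, I} : Set (EuclideanSpace ℝ (Fin 2))))
    (hC' : C' ≠ C ∧ dist O C' = R ∧ C' ∈ affineSpan ℝ ({C, I} : Set (EuclideanSpace ℝ (Fin 2)))) :
    ⟪A' - I, B' - C'⟫ = (0:ℝ) := by
  have : Fact (Module.finrank ℝ (EuclideanSpace ℝ (Fin 2)) = 2) := ⟨finrank_euclideanSpace_fin⟩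
  let s : Sphere (EuclideanSpace ℝ (Fin 2)) := ⟨O, R⟩
  have mem_s {p : EuclideanSpace ℝ (Fin 2)} (h : dist O p = R) : p ∈ s := by
    rwa [mem_sphere, dist_comm]
  exact inner_vsub_eq_zero_of_mem_affineSpan_pair
    (inner_vsub_vsub_eq_zero_of_angle_eq htri hIA hIB hIC hI₁ hI₂ hI₃ (mem_s hO.2.1)
      (mem_s hO.2.2) (mem_s hB'.2.1) (mem_s hC'.2.1) hB'.1 hC'.1 hB'.2.2 hC'.2.2) hA'.2.2
end

section
/- Let ABC be an acute triangle inscribed in a circle of radius R, with orthocenter H, and let B', C' be the reflections of H over CA, AB, and X the reflection of A over line B'C'. Then AX·BC = AH·B'C'. -/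
/-!
Put `A` at the origin and write `w = H - A`, `b = B - A`, `c = C - A`; the orthocenter conditions
say `⟪w, b⟫ = ⟪w, c⟫ = ⟪b, c⟫`. Then `u = B' - A` and `v = C' - A` are the reflections of `w` in
the lines `ℝ c` and `ℝ b`, so `‖u‖ = ‖v‖ = AH`; hence the foot of `A` on `B'C'` is the midpoint
of `B'C'` and `X - A = u + v`. In the rhombus spanned by `u` and `v`,
`‖u ± v‖² = 2 AH² ± 2 ⟪u, v⟫`, and `⟪u, v⟫ = AH² cos 2A` because the two reflections differ by a
rotation through `2A`. The claim then reduces to the planar relation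
`AH² (‖b‖² ‖c‖² - ⟪b, c⟫²) = ⟪b, c⟫² BC²`, i.e. to the vanishing of the Gram determinant of
`w, b, c`.
-/

open EuclideanGeometry Real RealInnerProductSpace

section
variable {V : Type*} [NormedAddCommGroup V] [InnerProductSpace ℝ V]

theorem Matrix.det_gram_eq_zero_of_finrank_lt {n : Type*} [Fintype n] [DecidableEq n]
    [FiniteDimensional ℝ V] (v : n → V) (hn : Module.finrank ℝ V < Fintype.card n) :
    (Matrix.gram ℝ v).det = 0 := by
  by_contra h
  exact hn.not_ge (Matrix.linearIndependent_of_det_gram_ne_zero h).fintype_card_le_finrank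

theorem norm_sq_mul_sub_inner_sq_of_inner_eq [FiniteDimensional ℝ V]
    (hV : Module.finrank ℝ V = 2) {b c w : V}
    (hwb : ⟪w, b⟫ = ⟪b, c⟫) (hwc : ⟪w, c⟫ = ⟪b, c⟫) :
    ‖w‖ ^ 2 * (‖b‖ ^ 2 * ‖c‖ ^ 2 - ⟪b, c⟫ ^ 2) = ⟪b, c⟫ ^ 2 * ‖b - c‖ ^ 2 := by
  have h := Matrix.det_gram_eq_zero_of_finrank_lt ![w, b, c] (by simp [hV])
  simp only [Matrix.det_fin_three, Matrix.gram_apply, Matrix.cons_val_zero, Matrix.cons_val_one,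
    Matrix.cons_val_two, Matrix.head_cons, Matrix.tail_cons] at h
  rw [← real_inner_self_eq_norm_sq, ← real_inner_self_eq_norm_sq, ← real_inner_self_eq_norm_sq,
    ← real_inner_self_eq_norm_sq]
  simp only [inner_sub_left, inner_sub_right, real_inner_comm w b, real_inner_comm w c,
    real_inner_comm b c] at h ⊢
  rw [hwb, hwc] at h
  linear_combination h

theorem norm_add_reflection_mul_norm_sub_eq_of_inner_eq [FiniteDimensional ℝ V]
    (hV : Module.finrank ℝ V = 2) {b c w : V} (hb : b ≠ 0) (hc : c ≠ 0)
    (hwb : ⟪w, b⟫ = ⟪b, c⟫) (hwc : ⟪w, c⟫ = ⟪b, c⟫) :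
    ‖(ℝ ∙ c).reflection w + (ℝ ∙ b).reflection w‖ * ‖b - c‖
      = ‖w‖ * ‖(ℝ ∙ c).reflection w - (ℝ ∙ b).reflection w‖ := by
  set u := (ℝ ∙ c).reflection w
  set v := (ℝ ∙ b).reflection w
  have hb2 : ‖b‖ ^ 2 ≠ 0 := by positivity
  have hc2 : ‖c‖ ^ 2 ≠ 0 := by positivity
  have huv : ⟪u, v⟫ * (‖b‖ ^ 2 * ‖c‖ ^ 2)
      = ‖w‖ ^ 2 * (‖b‖ ^ 2 * ‖c‖ ^ 2) - 2 * ⟪b, c⟫ ^ 2 * ‖b - c‖ ^ 2 := by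
    simp only [u, v, Submodule.reflection_singleton_apply, RCLike.ofReal_real_eq_id, id,
      two_nsmul, norm_sub_sq_real b c, inner_add_left, inner_add_right, inner_sub_left,
      inner_sub_right, real_inner_smul_left, real_inner_smul_right, real_inner_self_eq_norm_sq,
      real_inner_comm w, hwb, hwc, real_inner_comm c b]
    field_simp
    ring
  have hsq : (‖u + v‖ * ‖b - c‖) ^ 2 = (‖w‖ * ‖u - v‖) ^ 2 := by
    rw [mul_pow, mul_pow, norm_add_sq_real, norm_sub_sq_real u v, LinearIsometryEquiv.norm_map,
      LinearIsometryEquiv.norm_map]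
    apply mul_left_cancel₀ (mul_ne_zero hb2 hc2)
    linear_combination (2 * ‖b - c‖ ^ 2 + 2 * ‖w‖ ^ 2) * huv
      + 4 * ‖b - c‖ ^ 2 * norm_sq_mul_sub_inner_sq_of_inner_eq hV hwb hwc
  exact (pow_left_inj₀ (by positivity) (by positivity) two_ne_zero).1 hsq

variable {P : Type*} [MetricSpace P] [NormedAddTorsor V P]

theorem reflection_affineSpan_pair_vsub_left (p q x : P) :
    reflection line[ℝ, p, q] x -ᵥ p = (ℝ ∙ (q -ᵥ p)).reflection (x -ᵥ p) := by
  rw [reflection_apply_of_mem _ x (left_mem_affineSpan_pair ℝ p q), vadd_vsub]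
  simp only [direction_affineSpan, vectorSpan_pair_rev]

theorem reflection_affineSpan_pair_of_dist_eq {p q x : P} (h : dist x p = dist x q) :
    reflection line[ℝ, p, q] x = (p -ᵥ x) +ᵥ q := by
  have hcoef : 2 * ⟪q -ᵥ p, x -ᵥ p⟫ = ‖q -ᵥ p‖ ^ 2 := by
    rw [dist_eq_norm_vsub V, dist_eq_norm_vsub V, ← vsub_sub_vsub_cancel_right x q p] at h
    have := congrArg (· ^ 2) h
    simp only [norm_sub_sq_real, real_inner_comm (q -ᵥ p)] at this
    linarith
  rw [eq_vadd_iff_vsub_eq, ← vsub_sub_vsub_cancel_right _ q p,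
    reflection_affineSpan_pair_vsub_left, Submodule.reflection_singleton_apply,
    RCLike.ofReal_real_eq_id, id, ← Nat.cast_smul_eq_nsmul ℝ, smul_smul, Nat.cast_ofNat,
    ← mul_div_assoc, hcoef]
  rcases eq_or_ne q p with rfl | hqp
  · simp
  · rw [div_self (by simpa using hqp), one_smul, sub_sub_cancel_left, neg_vsub_eq_vsub_rev]
end

theorem stmt14_general
    (A B C H B' C' X : EuclideanSpace ℝ (Fin 2))
    (hacute : ∠ C A B < π / 2 ∧ ∠ A B C < π / 2 ∧ ∠ B C A < π / 2)
    (hH₁ : ⟪A - H, B - C⟫ = (0:ℝ)) (hH₂ : ⟪B - H, C - A⟫ = (0:ℝ))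
    (hB' : B' = EuclideanGeometry.reflection (affineSpan ℝ {C, A}) H)
    (hC' : C' = EuclideanGeometry.reflection (affineSpan ℝ {A, B}) H)
    (hX : X = EuclideanGeometry.reflection (affineSpan ℝ {B', C'}) A) :
    dist A X * dist B C = dist A H * dist B' C' := by
  obtain ⟨hCAB, hABC, -⟩ := hacute
  have hb : B - A ≠ 0 := sub_ne_zero.2 fun h ↦ by
    rw [h, angle_self_left] at hABC; exact hABC.false
  have hc : C - A ≠ 0 := sub_ne_zero.2 fun h ↦ by
    rw [h, angle_self_left] at hCAB; exact hCAB.false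
  have hwc : ⟪H - A, C - A⟫ = ⟪B - A, C - A⟫ := by
    rw [← sub_eq_zero, ← inner_sub_left, sub_sub_sub_cancel_right, ← neg_sub, inner_neg_left,
      hH₂, neg_zero]
  have hwb : ⟪H - A, B - A⟫ = ⟪B - A, C - A⟫ := by
    rw [← hwc, ← sub_eq_zero, ← inner_sub_right, sub_sub_sub_cancel_right, ← neg_sub A H,
      inner_neg_left, hH₁, neg_zero]
  have hB'A : B' - A = (ℝ ∙ (C - A)).reflection (H - A) := by
    rw [hB', eq_reflection_of_eq_subspace (s' := line[ℝ, A, C]) (by rw [Set.pair_comm]) H]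
    exact reflection_affineSpan_pair_vsub_left A C H
  have hC'A : C' - A = (ℝ ∙ (B - A)).reflection (H - A) :=
    hC' ▸ reflection_affineSpan_pair_vsub_left A B H
  have hAB' : dist A B' = dist A H :=
    hB' ▸ dist_reflection_eq_of_mem _ (right_mem_affineSpan_pair ℝ C A) H
  have hAC' : dist A C' = dist A H :=
    hC' ▸ dist_reflection_eq_of_mem _ (left_mem_affineSpan_pair ℝ A B) H
  have hXA : X - A = (B' - A) + (C' - A) := by
    rw [hX, reflection_affineSpan_pair_of_dist_eq (hAB'.trans hAC'.symm), vadd_eq_add,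
      vsub_eq_sub]
    abel
  have key :=
    norm_add_reflection_mul_norm_sub_eq_of_inner_eq finrank_euclideanSpace_fin hb hc hwb hwc
  rw [← hB'A, ← hC'A, ← hXA, sub_sub_sub_cancel_right, sub_sub_sub_cancel_right] at key
  rw [dist_comm A X, dist_comm A H, dist_eq_norm, dist_eq_norm, dist_eq_norm, dist_eq_norm, key]

theorem stmt14
    (A B C H B' C' X O : EuclideanSpace ℝ (Fin 2))
 (R : ℝ)
    (hacute : ∠ C A B < π / 2 ∧ ∠ A B C < π / 2 ∧ ∠ B C A < π / 2)
    (hH₁ : ⟪A - H, B - C⟫ = (0:ℝ)) (hH₂ : ⟪B - H, C - A⟫ = (0:ℝ))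
    (hH₃ : ⟪C - H, A - B⟫ = (0:ℝ))
    (hO : dist O A = R ∧ dist O B = R ∧ dist O C = R)
    (hB' : B' = EuclideanGeometry.reflection (affineSpan ℝ {C, A}) H)
    (hC' : C' = EuclideanGeometry.reflection (affineSpan ℝ {A, B}) H)
    (hX : X = EuclideanGeometry.reflection (affineSpan ℝ {B', C'}) A) :
    dist A X * dist B C = dist A H * dist B' C' :=
  stmt14_general A B C H B' C' X hacute hH₁ hH₂ hB' hC' hX
end
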